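/- arXiv:1708.02185 — 2 statements merged into one kernel-verified Lean document; each statement's English description precedes it below -/
import Mathlib

section
/- Let p ≥ 3 and d > p. If p is even and s ≥ 3p + 1, or p is odd and s ≥ 3p + 2, then the complement of the cycle C_s is not the intersection graph of any family of axis-parallel p-dimensional boxes (p-boxes) in ℝ^d. -/
open Set

/-- An axis-parallel box in `ℝ^d`: a product of nonempty closed intervals. -/
def IsBoxIn (d : ℕ) (s : Set (Fin d → ℝ)) : Prop :=
  ∃ lo hi : Fin d → ℝ, (∀ i, lo i ≤ hi i) ∧
    s = {x | ∀ i, x i ∈ Set.Icc (lo i) (hi i)}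

/-- A `p`-box in `ℝ^d`: a product of nonempty closed intervals, exactly `d - p`
of which are degenerate (single points). -/
def IsPBoxIn (p d : ℕ) (s : Set (Fin d → ℝ)) : Prop :=
  ∃ lo hi : Fin d → ℝ, (∀ i, lo i ≤ hi i) ∧
    {i : Fin d | lo i = hi i}.ncard = d - p ∧
    s = {x | ∀ i, x i ∈ Set.Icc (lo i) (hi i)}

/-- A graph is an interval graph if it is the intersection graph of a family of
closed real intervals. -/
def IsIntervalGraph {V : Type*} (G : SimpleGraph V) : Prop :=
  ∃ a b : V → ℝ, (∀ v, a v ≤ b v) ∧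
    ∀ u v : V, u ≠ v →
      (G.Adj u v ↔ (Set.Icc (a u) (b u) ∩ Set.Icc (a v) (b v)).Nonempty)

/-- `G` is the intersection graph of a family of `p`-boxes in `ℝ^d`. -/
def RealizableAsPBoxes {V : Type*} (p d : ℕ) (G : SimpleGraph V) : Prop :=
  ∃ B : V → Set (Fin d → ℝ), (∀ v, IsPBoxIn p d (B v)) ∧
    ∀ u v : V, u ≠ v → (G.Adj u v ↔ (B u ∩ B v).Nonempty)

/-- `G` is the intersection graph of a family of (full) axis-parallel boxes in `ℝ^d`. -/
def RealizableAsBoxes {V : Type*} (d : ℕ) (G : SimpleGraph V) : Prop :=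
  ∃ B : V → Set (Fin d → ℝ), (∀ v, IsBoxIn d (B v)) ∧
    ∀ u v : V, u ≠ v → (G.Adj u v ↔ (B u ∩ B v).Nonempty)

/-- The intersection graph of a family of sets in `ℝ^d`. -/
def intersectionGraph {ι : Type*} {d : ℕ} (B : ι → Set (Fin d → ℝ)) : SimpleGraph ι :=
  SimpleGraph.fromRel fun i j => (B i ∩ B j).Nonempty

/-- The family `B` can be pierced by at most `n` points. -/
def Pierceable {ι : Type*} {d : ℕ} (B : ι → Set (Fin d → ℝ)) (n : ℕ) : Prop :=
  ∃ P : Finset (Fin d → ℝ), P.card ≤ n ∧ ∀ i, ∃ p ∈ P, p ∈ B i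

/-- The subfamily of `B` indexed by `S` can be pierced by at most `n` points. -/
def PierceableOn {ι : Type*} {d : ℕ} (B : ι → Set (Fin d → ℝ)) (S : Finset ι) (n : ℕ) : Prop :=
  ∃ P : Finset (Fin d → ℝ), P.card ≤ n ∧ ∀ i ∈ S, ∃ p ∈ P, p ∈ B i

/-- The cycle graph on `s` vertices, with vertex set `ZMod s`. -/
def cyc (s : ℕ) : SimpleGraph (ZMod s) := SimpleGraph.fromRel fun i j => j = i + 1

/-- The boxicity of a graph, as an extended natural number. -/
noncomputable def boxicity {V : Type*} (G : SimpleGraph V) : ℕ∞ :=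
  sInf {n : ℕ∞ | ∃ k : ℕ, n = k ∧ RealizableAsBoxes k G}

/-- The `p`-boxicity of a graph: the least `d ≥ p` such that `G` is realizable as
`p`-boxes in `ℝ^d` (possibly `∞`). -/
noncomputable def pboxicity {V : Type*} (p : ℕ) (G : SimpleGraph V) : ℕ∞ :=
  sInf {n : ℕ∞ | ∃ k : ℕ, n = k ∧ p ≤ k ∧ RealizableAsPBoxes p k G}

/-
For a coordinate `i`, call the cycle edge `{v, v + 1}` separated at `i` if the `i`-th projections
of the boxes `B v` and `B (v + 1)` are disjoint; every edge is separated at some coordinate, since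
consecutive boxes are disjoint. All other pairs of boxes meet, so their projections meet in every
coordinate. Two disjoint intervals cannot both meet two other disjoint intervals, hence two edges
separated at the same coordinate lie within cyclic distance 2 of each other; and, as a point
cannot meet two disjoint intervals, a box that is a point in coordinate `i` lies within distance 1
of every edge separated at `i`. Consequently a coordinate separates at most 3 edges, and separated
edges plus degenerate boxes number at most 5 there. If `N` coordinates separate some edge, then
`s ≤ 3N`; and since every box is degenerate in all but at most `p` of these `N` coordinates, double
counting gives `s (N - p) + s ≤ 5N`. Together these force `s ≤ 3p` or `2s ≤ 5(p + 1)`.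
-/

open scoped Finset

namespace ZMod

variable {s : ℕ}

noncomputable def arc (u : ZMod s) (m n : ℤ) : Finset (ZMod s) :=
  (Finset.Icc m n).image fun e : ℤ => u + e

theorem mem_arc {u v : ZMod s} {m n : ℤ} :
    v ∈ arc u m n ↔ ∃ e : ℤ, (m ≤ e ∧ e ≤ n) ∧ u + e = v := by
  simp [arc]

theorem intCast_eq_intCast_of_abs_sub_lt {x y : ℤ} (h : (x : ZMod s) = y) (hxy : |x - y| < s) :
    x = y := by
  rw [intCast_eq_intCast_iff_dvd_sub] at h
  have := Int.eq_zero_of_abs_lt_dvd h (by rwa [abs_sub_comm])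
  omega

end ZMod

theorem Int.card_add_card_le_five_of_forall_le {T R : Finset ℤ} (hT : T.Nonempty)
    (hTT : ∀ t ∈ T, ∀ t' ∈ T, t' ≤ t + 2) (hTR : ∀ t ∈ T, ∀ r ∈ R, t - 1 ≤ r ∧ r ≤ t + 2) :
    #T ≤ 3 ∧ #T + #R ≤ 5 := by
  have hm := T.min'_mem hT
  have hM := T.max'_mem hT
  have hT' : T ⊆ Finset.Icc (T.min' hT) (T.max' hT) :=
    fun t ht => Finset.mem_Icc.2 ⟨T.min'_le t ht, T.le_max' t ht⟩
  have hR' : R ⊆ Finset.Icc (T.max' hT - 1) (T.min' hT + 2) :=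
    fun r hr => Finset.mem_Icc.2 ⟨(hTR _ hM r hr).1, (hTR _ hm r hr).2⟩
  have hcardT := Finset.card_le_card hT'
  have hcardR := Finset.card_le_card hR'
  have hwidth := hTT _ hm _ hM
  have hminmax := T.min'_le _ hM
  rw [Int.card_Icc] at hcardT hcardR
  omega

namespace ZMod

variable {s : ℕ}

/- Pass to integer offsets from a point `c ∈ S`: as `s ≥ 7`, all offsets that occur are
determined by their residues, which turns the hypotheses into inequalities in `ℤ`. -/
theorem card_add_card_le_five_of_forall_mem_arc (hs : 7 ≤ s) {S A : Finset (ZMod s)}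
    (hS : S.Nonempty) (hSS : ∀ v ∈ S, ∀ w ∈ S, w ∈ arc v (-2) 2)
    (hSA : ∀ x ∈ S, ∀ u ∈ A, u ∈ arc x (-1) 2) : #S ≤ 3 ∧ #S + #A ≤ 5 := by
  obtain ⟨c, hc⟩ := hS
  set T : Finset ℤ := {t ∈ Finset.Icc (-2) 2 | c + t ∈ S}
  set R : Finset ℤ := {r ∈ Finset.Icc (-1) 2 | c + r ∈ A}
  have hST : S ⊆ T.image fun t : ℤ => c + t := by
    intro v hv
    obtain ⟨t, ht, rfl⟩ := mem_arc.1 (hSS c hc v hv)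
    exact Finset.mem_image_of_mem _ (Finset.mem_filter.2 ⟨Finset.mem_Icc.2 ht, hv⟩)
  have hAR : A ⊆ R.image fun r : ℤ => c + r := by
    intro u hu
    obtain ⟨r, hr, rfl⟩ := mem_arc.1 (hSA c hc u hu)
    exact Finset.mem_image_of_mem _ (Finset.mem_filter.2 ⟨Finset.mem_Icc.2 hr, hu⟩)
  have hTT : ∀ t ∈ T, ∀ t' ∈ T, t' ≤ t + 2 := by
    intro t ht t' ht'
    simp only [T, Finset.mem_filter, Finset.mem_Icc] at ht ht'
    obtain ⟨e, he, h⟩ := mem_arc.1 (hSS _ ht.2 _ ht'.2)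
    have : t + e = t' := intCast_eq_intCast_of_abs_sub_lt
      (by push_cast; linear_combination h) (by rw [abs_lt]; omega)
    omega
  have hTR : ∀ t ∈ T, ∀ r ∈ R, t - 1 ≤ r ∧ r ≤ t + 2 := by
    intro t ht r hr
    simp only [T, R, Finset.mem_filter, Finset.mem_Icc] at ht hr
    obtain ⟨e, he, h⟩ := mem_arc.1 (hSA _ ht.2 _ hr.2)
    have : t + e = r := intCast_eq_intCast_of_abs_sub_lt
      (by push_cast; linear_combination h) (by rw [abs_lt]; omega)
    omega
  have := (Finset.card_le_card hST).trans Finset.card_image_le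
  have := (Finset.card_le_card hAR).trans Finset.card_image_le
  have := Int.card_add_card_le_five_of_forall_le ⟨0, by simp [T, hc]⟩ hTT hTR
  omega

end ZMod

open ZMod

theorem compl_cyc_adj_iff {s : ℕ} {u v : ZMod s} : (cyc s)ᶜ.Adj u v ↔ v ∉ arc u (-1) 1 := by
  have hIcc : Finset.Icc (-1 : ℤ) 1 = {-1, 0, 1} := by decide
  have hpred : v = u + -1 ↔ u = v + 1 :=
    ⟨fun h => by linear_combination -h, fun h => by linear_combination -h⟩
  simp only [SimpleGraph.compl_adj, cyc, SimpleGraph.fromRel_adj, mem_arc, ← Finset.mem_Icc, hIcc,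
    Finset.mem_insert, Finset.mem_singleton, exists_eq_or_imp, ↓existsAndEq, true_and, Int.cast_neg,
    Int.cast_one, Int.cast_zero, add_zero, eq_comm (a := u + _), hpred]
  tauto

theorem compl_cyc_adj_add_add {s : ℕ} {u v : ZMod s} {m n x y : ℤ} (h : v ∉ arc u m n)
    (hm : m ≤ x - y - 1) (hn : x - y + 1 ≤ n) : (cyc s)ᶜ.Adj (u + x) (v + y) := by
  rw [compl_cyc_adj_iff]
  intro hmem
  obtain ⟨e, he, hv⟩ := mem_arc.1 hmem
  exact h (mem_arc.2 ⟨x + e - y, by omega, by push_cast; linear_combination hv⟩)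

section Intervals

variable {α : Type*} [LinearOrder α] {s : ℕ} [NeZero s] {a b : ZMod s → α}

/-- `v ∈ sepEdges a b` iff the intervals `[a v, b v]` and `[a (v + 1), b (v + 1)]` are
disjoint. -/
def sepEdges (a b : ZMod s → α) : Finset (ZMod s) := {v | b v < a (v + 1) ∨ b (v + 1) < a v}

theorem mem_arc_of_mem_sepEdges (hfar : ∀ u v, (cyc s)ᶜ.Adj u v → a u ≤ b v) {v w : ZMod s}
    (hv : v ∈ sepEdges a b) (hw : w ∈ sepEdges a b) : w ∈ arc v (-2) 2 := by
  by_contra h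
  have hmeet (x y : ℤ) (hx : 0 ≤ x ∧ x ≤ 1) (hy : 0 ≤ y ∧ y ≤ 1) :
      a (v + x) ≤ b (w + y) ∧ a (w + y) ≤ b (v + x) := by
    have hadj := compl_cyc_adj_add_add h (x := x) (y := y) (by omega) (by omega)
    exact ⟨hfar _ _ hadj, hfar _ _ hadj.symm⟩
  have h00 := hmeet 0 0 (by norm_num) (by norm_num)
  have h01 := hmeet 0 1 (by norm_num) (by norm_num)
  have h10 := hmeet 1 0 (by norm_num) (by norm_num)
  have h11 := hmeet 1 1 (by norm_num) (by norm_num)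
  simp only [Int.cast_zero, Int.cast_one, add_zero] at h00 h01 h10 h11
  simp only [sepEdges, Finset.mem_filter, Finset.mem_univ, true_and] at hv hw
  rcases hv with hv | hv <;> rcases hw with hw | hw <;> order

theorem mem_arc_of_mem_sepEdges_of_eq (hfar : ∀ u v, (cyc s)ᶜ.Adj u v → a u ≤ b v)
    {x u : ZMod s} (hx : x ∈ sepEdges a b) (hu : a u = b u) : u ∈ arc x (-1) 2 := by
  by_contra h
  have hmeet (y : ℤ) (hy : 0 ≤ y ∧ y ≤ 1) : a (x + y) ≤ b u ∧ a u ≤ b (x + y) := by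
    have hadj := compl_cyc_adj_add_add h (x := y) (y := 0) (by omega) (by omega)
    rw [Int.cast_zero, add_zero] at hadj
    exact ⟨hfar _ _ hadj, hfar _ _ hadj.symm⟩
  have h0 := hmeet 0 (by norm_num)
  have h1 := hmeet 1 (by norm_num)
  simp only [Int.cast_zero, Int.cast_one, add_zero] at h0 h1
  simp only [sepEdges, Finset.mem_filter, Finset.mem_univ, true_and] at hx
  rcases hx with hx | hx <;> order

theorem card_sepEdges_le (hfar : ∀ u v, (cyc s)ᶜ.Adj u v → a u ≤ b v) (hs : 7 ≤ s)
    (hne : (sepEdges a b).Nonempty) :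
    #(sepEdges a b) ≤ 3 ∧ #(sepEdges a b) + #{u | a u = b u} ≤ 5 :=
  card_add_card_le_five_of_forall_mem_arc hs hne
    (fun _ hv _ hw => mem_arc_of_mem_sepEdges hfar hv hw)
    (fun _ hx _ hu => mem_arc_of_mem_sepEdges_of_eq hfar hx (Finset.mem_filter.1 hu).2)

end Intervals

theorem Set.Icc_inter_Icc_nonempty_iff {α : Type*} [Lattice α] {a₁ b₁ a₂ b₂ : α}
    (h₁ : a₁ ≤ b₁) (h₂ : a₂ ≤ b₂) : (Icc a₁ b₁ ∩ Icc a₂ b₂).Nonempty ↔ a₁ ≤ b₂ ∧ a₂ ≤ b₁ := by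
  rw [Icc_inter_Icc, nonempty_Icc, sup_le_iff, le_inf_iff, le_inf_iff]
  tauto

theorem RealizableAsPBoxes.exists_lo_hi {V : Type*} {p d : ℕ} {G : SimpleGraph V}
    (h : RealizableAsPBoxes p d G) :
    ∃ lo hi : V → Fin d → ℝ, (∀ v, #{i | lo v i ≠ hi v i} ≤ p) ∧
      ∀ u v, u ≠ v → (G.Adj u v ↔ lo u ≤ hi v ∧ lo v ≤ hi u) := by
  choose B hB hadj using h
  choose lo hi hle hdeg hB using hB
  refine ⟨lo, hi, fun v => ?_, fun u v huv => ?_⟩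
  · have hdeg' : #{i | lo v i = hi v i} = d - p := by
      rw [← hdeg v, ← Set.ncard_coe_finset, Finset.coe_filter]
      simp
    have hcompl := Finset.card_filter_add_card_filter_not (s := Finset.univ)
      (fun i => lo v i = hi v i)
    rw [Finset.card_univ, Fintype.card_fin] at hcompl
    simp only [ne_eq]
    omega
  · have hIcc : ∀ w, B w = Icc (lo w) (hi w) := fun w => by
      ext x
      simp [hB w, Pi.le_def, forall_and]
    rw [hadj u v huv, hIcc, hIcc, Icc_inter_Icc_nonempty_iff (hle u) (hle v)]

theorem exists_mem_sepEdges {ι α : Type*} [LinearOrder α] {s : ℕ} [NeZero s] (hs : 2 ≤ s)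
    {lo hi : ZMod s → ι → α}
    (hadj : ∀ u v, u ≠ v → ((cyc s)ᶜ.Adj u v ↔ lo u ≤ hi v ∧ lo v ≤ hi u)) (v : ZMod s) :
    ∃ i, v ∈ sepEdges (lo · i) (hi · i) := by
  have : Fact (1 < s) := ⟨hs⟩
  have hnadj : ¬ (cyc s)ᶜ.Adj v (v + 1) := by
    rw [compl_cyc_adj_iff, not_not]
    exact mem_arc.2 ⟨1, by norm_num, by simp⟩
  rw [hadj _ _ (by simp)] at hnadj
  simp only [Pi.le_def, not_and_or, not_forall, not_le] at hnadj
  rcases hnadj with ⟨i, hi⟩ | ⟨i, hi⟩ <;> exact ⟨i, by simp [sepEdges, hi]⟩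

theorem exists_card_le_mul_of_cover {ι V : Type*} [Fintype ι] [Fintype V] [DecidableEq V] {k l p : ℕ}
    (S D : ι → Finset V) (hcover : ∀ v, ∃ i, v ∈ S i)
    (hS : ∀ i, (S i).Nonempty → #(S i) ≤ k ∧ #(S i) + #(D i) ≤ l)
    (hD : ∀ u, #{i | u ∉ D i} ≤ p) :
    ∃ N, Fintype.card V ≤ k * N ∧ Fintype.card V * (N + 1) ≤ l * N + Fintype.card V * p := by
  classical
  set I : Finset ι := {i | (S i).Nonempty}
  have hcov : Fintype.card V ≤ ∑ i ∈ I, #(S i) := calc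
    Fintype.card V ≤ #(I.biUnion S) := by
      rw [← Finset.card_univ]
      refine Finset.card_le_card fun v _ => ?_
      obtain ⟨i, hi⟩ := hcover v
      exact Finset.mem_biUnion.2 ⟨i, Finset.mem_filter.2 ⟨Finset.mem_univ i, v, hi⟩, hi⟩
    _ ≤ ∑ i ∈ I, #(S i) := Finset.card_biUnion_le
  have hdeg : Fintype.card V * (#I - p) ≤ ∑ i ∈ I, #(D i) := calc
    Fintype.card V * (#I - p) ≤ ∑ u : V, #{i ∈ I | u ∈ D i} := by
      rw [← smul_eq_mul, ← Finset.card_univ]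
      refine Finset.card_nsmul_le_sum _ _ _ fun u _ => ?_
      have hsplit := Finset.card_filter_add_card_filter_not (s := I) (fun i => u ∈ D i)
      have hsub : #{i ∈ I | u ∉ D i} ≤ #{i | u ∉ D i} :=
        Finset.card_le_card (Finset.filter_subset_filter _ (Finset.subset_univ I))
      have := hD u
      omega
    _ = ∑ i ∈ I, #(D i) := by
      have := Finset.sum_card_bipartiteAbove_eq_sum_card_bipartiteBelow (s := I)
        (t := Finset.univ) (fun i u => u ∈ D i)
      simpa [Finset.bipartiteAbove, Finset.bipartiteBelow] using this.symm
  have hSk : ∑ i ∈ I, #(S i) ≤ #I * k :=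
    Finset.sum_le_card_nsmul _ _ _ fun i hi => (hS i (Finset.mem_filter.1 hi).2).1
  have hSDl : ∑ i ∈ I, (#(S i) + #(D i)) ≤ #I * l :=
    Finset.sum_le_card_nsmul _ _ _ fun i hi => (hS i (Finset.mem_filter.1 hi).2).2
  rw [Finset.sum_add_distrib] at hSDl
  have hsplit : Fintype.card V * #I ≤ Fintype.card V * (#I - p) + Fintype.card V * p := by
    rw [← mul_add]
    exact Nat.mul_le_mul_left _ le_tsub_add
  exact ⟨#I, by linarith, by linarith⟩

theorem compl_cycle_not_realizable_p_boxes_general (p d s : ℕ) (hp : 3 ≤ p)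
    (hs : (Even p ∧ 3 * p + 1 ≤ s) ∨ (Odd p ∧ 3 * p + 2 ≤ s)) :
    ¬ RealizableAsPBoxes p d (cyc s)ᶜ := by
  intro h
  obtain ⟨lo, hi, hdeg, hadj⟩ := h.exists_lo_hi
  have hs' : 3 * p + 1 ≤ s ∧ 5 * p + 5 < 2 * s := by
    rcases hs with ⟨⟨m, rfl⟩, hs⟩ | ⟨-, hs⟩ <;> omega
  have : NeZero s := ⟨by omega⟩
  have hfar (i : Fin d) (u v : ZMod s) (huv : (cyc s)ᶜ.Adj u v) : lo u i ≤ hi v i :=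
    ((hadj u v huv.ne).1 huv).1 i
  obtain ⟨N, hcover, hcount⟩ := exists_card_le_mul_of_cover (p := p)
    (fun i => sepEdges (lo · i) (hi · i)) (fun i => {u | lo u i = hi u i})
    (exists_mem_sepEdges (by omega) hadj)
    (fun i => card_sepEdges_le (hfar i) (by omega))
    (fun u => by simpa using hdeg u)
  rw [ZMod.card] at hcover hcount
  obtain ⟨m, rfl⟩ : ∃ m, N = p + 1 + m := ⟨N - (p + 1), by omega⟩
  nlinarith [Nat.mul_le_mul_right m (show 5 ≤ s by omega)]

/-- for `p ≥ 3`, `d > p`, and `s ≥ 3p+1` (`p` even) or `s ≥ 3p+2`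
(`p` odd), the complement of `C_s` is not realizable as `p`-boxes in `ℝ^d`. -/
theorem compl_cycle_not_realizable_p_boxes (p d s : ℕ) (hp : 3 ≤ p) (hd : p < d)
    (hs : (Even p ∧ 3 * p + 1 ≤ s) ∨ (Odd p ∧ 3 * p + 2 ≤ s)) :
    ¬ RealizableAsPBoxes p d (cyc s)ᶜ :=
  compl_cycle_not_realizable_p_boxes_general p d s hp hs
end

section
/- Every finite family of axis-parallel segments (1-boxes) in ℝ^d, d ≥ 1, is 2-pierceable if and only if every subfamily of cardinality 5 is 2-pierceable; i.e., h(d,1,2) = 5 (for d ≥ 2). -/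
open Set

/-- An axis-parallel segment in `ℝ^d`: a product of closed intervals, all but at most
one of which are single points. -/
def IsSegmentIn (d : ℕ) (s : Set (Fin d → ℝ)) : Prop :=
  ∃ lo hi : Fin d → ℝ, (∀ i, lo i ≤ hi i) ∧
    {i : Fin d | lo i ≠ hi i}.ncard ≤ 1 ∧
    s = {x | ∀ i, x i ∈ Set.Icc (lo i) (hi i)}

/-!
By Helly's theorem for boxes, the family is 2-pierceable as soon as it splits into two
subfamilies of pairwise intersecting members, and the hypothesis rules out cycles of length 3
and 5 in the graph joining disjoint members. Fix disjoint members `s₁, s₂`. If the members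
meeting both pairwise intersect, the members meeting everything disjoint from `s₂`, and those
meeting everything disjoint from `s₁`, form such a split. Otherwise there are disjoint `t, u`
meeting both `s₁` and `s₂`. For segments, `s₁, t, s₂, u` are then the sides of an axis-parallel
rectangle and every segment meeting two adjacent sides passes through their common corner. So
if one member avoids both corners of one diagonal and another member those of the other
diagonal, the two close a 5-cycle with three of the sides.
-/

def axisLine {ι α : Type*} (p : ι → α) (k : ι) : Set (ι → α) :=
  {x | ∀ i ≠ k, x i = p i}

section AxisLine

variable {ι α : Type*} {p x : ι → α} {k : ι}

theorem mem_axisLine_self : p ∈ axisLine p k := fun _ _ => rfl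

theorem eq_of_mem_axisLine (hx : x ∈ axisLine p k) (hk : x k = p k) : x = p := by
  funext i
  by_cases hi : i = k
  · exact hi ▸ hk
  · exact hx i hi

theorem update_eq_of_mem_axisLine [DecidableEq ι] (hx : x ∈ axisLine p k) :
    Function.update p k (x k) = x := by
  funext i
  by_cases hi : i = k
  · subst hi
    simp
  · simp [Function.update_of_ne hi, hx i hi]

end AxisLine

theorem mem_uIcc_or_mem_uIcc {α : Type*} [LinearOrder α] {a₁ a₂ b₁ b₂ : α}
    (h₁ : b₁ ∉ uIcc a₁ a₂) (h₂ : a₁ ∉ uIcc b₁ b₂) : a₁ ∈ uIcc a₂ b₂ ∨ a₂ ∈ uIcc a₁ b₁ := by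
  simp only [mem_uIcc] at *
  grind

/-- Intersection graphs of intervals have no induced 4-cycle. -/
theorem not_disjoint_of_ordConnected_cycle {α : Type*} [LinearOrder α] {s₁ s₂ t u : Set α}
    (hs₁ : s₁.OrdConnected) (hs₂ : s₂.OrdConnected) (ht : t.OrdConnected) (hu : u.OrdConnected)
    (h₁₂ : Disjoint s₁ s₂) {a₁ a₂ b₁ b₂ : α} (ha₁ : a₁ ∈ s₁ ∩ t) (hb₁ : b₁ ∈ s₂ ∩ t)
    (ha₂ : a₂ ∈ s₁ ∩ u) (hb₂ : b₂ ∈ s₂ ∩ u) : ¬Disjoint t u := by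
  have key : a₁ ∈ uIcc a₂ b₂ ∨ a₂ ∈ uIcc a₁ b₁ :=
    mem_uIcc_or_mem_uIcc (fun h => h₁₂.ne_of_mem (hs₁.uIcc_subset ha₁.1 ha₂.1 h) hb₁.1 rfl)
      (fun h => h₁₂.ne_of_mem ha₁.1 (hs₂.uIcc_subset hb₁.1 hb₂.1 h) rfl)
  rw [not_disjoint_iff]
  rcases key with h | h
  · exact ⟨a₁, ha₁.2, hu.uIcc_subset ha₂.2 hb₂.2 h⟩
  · exact ⟨a₂, ht.uIcc_subset ha₁.2 hb₁.2 h, ha₂.2⟩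

section Geometry

variable {d : ℕ}

theorem IsBoxIn.exists_eq_Icc {s : Set (Fin d → ℝ)} (hs : IsBoxIn d s) :
    ∃ lo hi, s = Icc lo hi := by
  obtain ⟨lo, hi, -, rfl⟩ := hs
  exact ⟨lo, hi, by ext x; simp [Pi.le_def, forall_and]⟩

theorem IsBoxIn.ordConnected {s : Set (Fin d → ℝ)} (hs : IsBoxIn d s) : s.OrdConnected := by
  obtain ⟨lo, hi, rfl⟩ := hs.exists_eq_Icc
  exact ordConnected_Icc

theorem IsSegmentIn.isBoxIn {s : Set (Fin d → ℝ)} (hs : IsSegmentIn d s) : IsBoxIn d s := by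
  obtain ⟨lo, hi, hle, -, rfl⟩ := hs
  exact ⟨lo, hi, hle, rfl⟩

theorem IsSegmentIn.subset_axisLine {s : Set (Fin d → ℝ)} (hs : IsSegmentIn d s)
    {x y : Fin d → ℝ} {k : Fin d} (hx : x ∈ s) (hy : y ∈ s) (hxy : x k ≠ y k) :
    s ⊆ axisLine x k := by
  obtain ⟨lo, hi, -, hcard, rfl⟩ := hs
  have hk : lo k ≠ hi k := fun h => hxy <| by
    obtain ⟨hxlo, hxhi⟩ := hx k
    obtain ⟨hylo, hyhi⟩ := hy k
    linarith
  intro z hz i hik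
  have hi : lo i = hi i := by
    by_contra h
    exact hik ((Set.ncard_le_one (Set.toFinite _)).1 hcard i h k hk)
  have hzi := hz i
  have hxi := hx i
  simp only [mem_Icc, hi] at hzi hxi
  linarith

theorem IsSegmentIn.mem_of_mem_axisLine {v : Set (Fin d → ℝ)} (hv : IsSegmentIn d v)
    {p x y : Fin d → ℝ} {j k : Fin d} (hjk : j ≠ k) (hx : x ∈ v) (hy : y ∈ v)
    (hxp : x ∈ axisLine p j) (hyp : y ∈ axisLine p k) : p ∈ v := by
  by_cases hxj : x j = p j
  · rwa [← eq_of_mem_axisLine hxp hxj]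
  · have hxy : x j ≠ y j := by rwa [hyp j hjk]
    have hyk : y k = p k :=
      (hv.subset_axisLine hx hy hxy hy k hjk.symm).trans (hxp k hjk.symm)
    rwa [← eq_of_mem_axisLine hyp hyk]

theorem not_disjoint_of_mem_axisLine {s₁ s₂ t u : Set (Fin d → ℝ)} (hs₁ : s₁.OrdConnected)
    (hs₂ : s₂.OrdConnected) (ht : t.OrdConnected) (hu : u.OrdConnected) (h₁₂ : Disjoint s₁ s₂)
    {p x₁ y₁ x₂ y₂ : Fin d → ℝ} {k : Fin d} (hx₁ : x₁ ∈ s₁ ∩ t) (hy₁ : y₁ ∈ s₂ ∩ t)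
    (hx₂ : x₂ ∈ s₁ ∩ u) (hy₂ : y₂ ∈ s₂ ∩ u) (hx₁L : x₁ ∈ axisLine p k)
    (hy₁L : y₁ ∈ axisLine p k) (hx₂L : x₂ ∈ axisLine p k) (hy₂L : y₂ ∈ axisLine p k) :
    ¬Disjoint t u := by
  have hf : Monotone (Function.update p k) := Function.update_mono
  have mem : ∀ z ∈ axisLine p k, ∀ s, z ∈ s → z k ∈ Function.update p k ⁻¹' s :=
    fun z hz s h => by rwa [mem_preimage, update_eq_of_mem_axisLine hz]
  refine mt (Disjoint.preimage _) (not_disjoint_of_ordConnected_cycle (hs₁.preimage_mono hf)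
    (hs₂.preimage_mono hf) (ht.preimage_mono hf) (hu.preimage_mono hf) (h₁₂.preimage _)
    ⟨mem _ hx₁L _ hx₁.1, mem _ hx₁L _ hx₁.2⟩ ⟨mem _ hy₁L _ hy₁.1, mem _ hy₁L _ hy₁.2⟩
    ⟨mem _ hx₂L _ hx₂.1, mem _ hx₂L _ hx₂.2⟩ ⟨mem _ hy₂L _ hy₂.1, mem _ hy₂L _ hy₂.2⟩)

variable {s₁ s₂ t u : Set (Fin d → ℝ)} {x₁ y₁ x₂ y₂ : Fin d → ℝ}

theorem exists_ne_subset_axisLine (hs₁ : IsSegmentIn d s₁) (hs₂ : IsSegmentIn d s₂)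
    (ht : IsSegmentIn d t) (hu : IsSegmentIn d u) (h₁₂ : Disjoint s₁ s₂) (htu : Disjoint t u)
    (hx₁ : x₁ ∈ s₁ ∩ t) (hy₁ : y₁ ∈ s₂ ∩ t) (hx₂ : x₂ ∈ s₁ ∩ u) (hy₂ : y₂ ∈ s₂ ∩ u) :
    ∃ j k, j ≠ k ∧ s₁ ⊆ axisLine x₁ j ∧ t ⊆ axisLine x₁ k := by
  obtain ⟨j, hj⟩ := Function.ne_iff.1 (htu.ne_of_mem hx₁.2 hx₂.2)
  obtain ⟨k, hk⟩ := Function.ne_iff.1 (h₁₂.ne_of_mem hx₁.1 hy₁.1)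
  have hs₁L := hs₁.subset_axisLine hx₁.1 hx₂.1 hj
  have htL := ht.subset_axisLine hx₁.2 hy₁.2 hk
  refine ⟨j, k, ?_, hs₁L, htL⟩
  rintro rfl
  have hx₂L := hs₁L hx₂.1
  have hy₁L := htL hy₁.2
  by_cases hy₂L : y₂ ∈ axisLine x₁ j
  · exact not_disjoint_of_mem_axisLine hs₁.isBoxIn.ordConnected hs₂.isBoxIn.ordConnected
      ht.isBoxIn.ordConnected hu.isBoxIn.ordConnected h₁₂ hx₁ hy₁ hx₂ hy₂ mem_axisLine_self
      hy₁L hx₂L hy₂L htu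
  -- `y₂` leaves the line in a direction `i`, which is then the direction of both `s₂` and `u`.
  obtain ⟨i, hij, hi⟩ : ∃ i ≠ j, y₂ i ≠ x₁ i := by simpa [axisLine] using hy₂L
  have hy₂y₁ : y₂ j = y₁ j :=
    hs₂.subset_axisLine hy₁.1 hy₂.1 (by rw [hy₁L i hij]; exact hi.symm) hy₂.1 j hij.symm
  have hy₂x₂ : y₂ j = x₂ j :=
    hu.subset_axisLine hx₂.2 hy₂.2 (by rw [hx₂L i hij]; exact hi.symm) hy₂.2 j hij.symm
  exact h₁₂.ne_of_mem hx₂.1 hy₁.1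
    (eq_of_mem_axisLine (fun l hl => (hx₂L l hl).trans (hy₁L l hl).symm) (hy₂x₂.symm.trans hy₂y₁))

theorem IsSegmentIn.corner_mem (hs₁ : IsSegmentIn d s₁) (hs₂ : IsSegmentIn d s₂)
    (ht : IsSegmentIn d t) (hu : IsSegmentIn d u) (h₁₂ : Disjoint s₁ s₂) (htu : Disjoint t u)
    (hx₁ : x₁ ∈ s₁ ∩ t) (hy₁ : y₁ ∈ s₂ ∩ t) (hx₂ : x₂ ∈ s₁ ∩ u) (hy₂ : y₂ ∈ s₂ ∩ u)
    {v : Set (Fin d → ℝ)} (hv : IsSegmentIn d v) (hvs : ¬Disjoint v s₁) (hvt : ¬Disjoint v t) :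
    x₁ ∈ v := by
  obtain ⟨j, k, hjk, hs₁L, htL⟩ := exists_ne_subset_axisLine hs₁ hs₂ ht hu h₁₂ htu hx₁ hy₁ hx₂ hy₂
  obtain ⟨x, hxv, hxs⟩ := not_disjoint_iff.1 hvs
  obtain ⟨y, hyv, hyt⟩ := not_disjoint_iff.1 hvt
  exact hv.mem_of_mem_axisLine hjk hxv hyv (hs₁L hxs) (htL hyt)

end Geometry

theorem exists_forall_mem_Icc_of_le {α ι : Type*} [Lattice α] [Nonempty α] (s : Finset ι)
    {lo hi : ι → α} (h : ∀ i ∈ s, ∀ j ∈ s, lo i ≤ hi j) : ∃ x, ∀ i ∈ s, x ∈ Icc (lo i) (hi i) := by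
  rcases s.eq_empty_or_nonempty with rfl | hs
  · exact ⟨Classical.arbitrary α, by simp⟩
  · exact ⟨s.sup' hs lo, fun i hi => ⟨s.le_sup' lo hi, s.sup'_le hs lo fun j hj => h j hj i hi⟩⟩

section Piercing

variable {ι : Type*} {d : ℕ} {B : ι → Set (Fin d → ℝ)}

theorem IsBoxIn.exists_forall_mem_of_pairwise (s : Finset ι) (hB : ∀ i ∈ s, IsBoxIn d (B i))
    (h : ∀ i ∈ s, ∀ j ∈ s, ¬Disjoint (B i) (B j)) : ∃ x, ∀ i ∈ s, x ∈ B i := by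
  choose! lo hi hB using fun i hi => (hB i hi).exists_eq_Icc
  obtain ⟨x, hx⟩ := exists_forall_mem_Icc_of_le s (lo := lo) (hi := hi) fun i hi j hj => by
    obtain ⟨z, hzi, hzj⟩ := not_disjoint_iff.1 (h i hi j hj)
    rw [hB i hi] at hzi
    rw [hB j hj] at hzj
    exact hzi.1.trans hzj.2
  exact ⟨x, fun i hi => hB i hi ▸ hx i hi⟩

theorem Pierceable.pierceableOn {n : ℕ} (h : Pierceable B n) (S : Finset ι) :
    PierceableOn B S n :=
  let ⟨P, hP, hB⟩ := h
  ⟨P, hP, fun i _ => hB i⟩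

theorem pierceable_two_of_forall_mem_or {p q : Fin d → ℝ} (h : ∀ i, p ∈ B i ∨ q ∈ B i) :
    Pierceable B 2 := by
  classical
  exact ⟨{p, q}, Finset.card_le_two,
    fun i => (h i).elim (fun hp => ⟨p, by simp, hp⟩) (fun hq => ⟨q, by simp, hq⟩)⟩

theorem pierceable_two_of_forall_or [Fintype ι] (hB : ∀ i, IsBoxIn d (B i)) (P Q : ι → Prop)
    (hP : ∀ i, P i → ∀ j, P j → ¬Disjoint (B i) (B j))
    (hQ : ∀ i, Q i → ∀ j, Q j → ¬Disjoint (B i) (B j))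
    (hPQ : ∀ i, P i ∨ Q i) : Pierceable B 2 := by
  classical
  obtain ⟨p, hp⟩ := IsBoxIn.exists_forall_mem_of_pairwise (Finset.univ.filter P)
    (fun i _ => hB i) (by simpa using hP)
  obtain ⟨q, hq⟩ := IsBoxIn.exists_forall_mem_of_pairwise (Finset.univ.filter Q)
    (fun i _ => hB i) (by simpa using hQ)
  exact pierceable_two_of_forall_mem_or fun i =>
    (hPQ i).imp (fun h => hp i (by simpa using h)) (fun h => hq i (by simpa using h))

theorem not_pierceableOn_two_of_cycle [DecidableEq ι] {i₀ i₁ i₂ i₃ i₄ : ι}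
    (h₀₁ : Disjoint (B i₀) (B i₁)) (h₁₂ : Disjoint (B i₁) (B i₂)) (h₂₃ : Disjoint (B i₂) (B i₃))
    (h₃₄ : Disjoint (B i₃) (B i₄)) (h₄₀ : Disjoint (B i₄) (B i₀)) :
    ¬PierceableOn B {i₀, i₁, i₂, i₃, i₄} 2 := by
  rintro ⟨P, hP, hpierce⟩
  have hthree : ∀ a ∈ P, ∀ b ∈ P, ∀ c ∈ P, a ≠ b → b ≠ c → a = c := by
    intro a ha b hb c hc hab hbc
    by_contra hac
    exact not_lt.2 hP (Finset.two_lt_card_iff.2 ⟨a, b, c, ha, hb, hc, hab, hac, hbc⟩)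
  obtain ⟨r₀, hr₀, hr₀B⟩ := hpierce i₀ (by simp)
  obtain ⟨r₁, hr₁, hr₁B⟩ := hpierce i₁ (by simp)
  obtain ⟨r₂, hr₂, hr₂B⟩ := hpierce i₂ (by simp)
  obtain ⟨r₃, hr₃, hr₃B⟩ := hpierce i₃ (by simp)
  obtain ⟨r₄, hr₄, hr₄B⟩ := hpierce i₄ (by simp)
  have h₀₂ := hthree r₀ hr₀ r₁ hr₁ r₂ hr₂ (h₀₁.ne_of_mem hr₀B hr₁B) (h₁₂.ne_of_mem hr₁B hr₂B)
  have h₂₄ := hthree r₂ hr₂ r₃ hr₃ r₄ hr₄ (h₂₃.ne_of_mem hr₂B hr₃B) (h₃₄.ne_of_mem hr₃B hr₄B)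
  exact h₄₀.ne_of_mem hr₄B hr₀B (h₂₄.symm.trans h₀₂.symm)

theorem false_of_disjoint_cycle (h5 : ∀ S : Finset ι, S.card ≤ 5 → PierceableOn B S 2)
    {i₀ i₁ i₂ i₃ i₄ : ι}
    (h₀₁ : Disjoint (B i₀) (B i₁)) (h₁₂ : Disjoint (B i₁) (B i₂)) (h₂₃ : Disjoint (B i₂) (B i₃))
    (h₃₄ : Disjoint (B i₃) (B i₄)) (h₄₀ : Disjoint (B i₄) (B i₀)) : False := by
  classical
  exact not_pierceableOn_two_of_cycle h₀₁ h₁₂ h₂₃ h₃₄ h₄₀ (h5 _ Finset.card_le_five)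

theorem not_disjoint_or_not_disjoint (h5 : ∀ S : Finset ι, S.card ≤ 5 → PierceableOn B S 2)
    {a b : ι} (hab : Disjoint (B a) (B b)) (c : ι) :
    ¬Disjoint (B c) (B a) ∨ ¬Disjoint (B c) (B b) := by
  by_contra! h
  exact false_of_disjoint_cycle h5 h.1 hab h.2.symm h.1 h.1.symm

theorem not_disjoint_of_forall_not_disjoint {i₁ i₂ : ι} (h₁₂ : Disjoint (B i₁) (B i₂))
    (hC : ∀ t u, ¬Disjoint (B i₁) (B t) → ¬Disjoint (B i₂) (B t) → ¬Disjoint (B i₁) (B u) →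
      ¬Disjoint (B i₂) (B u) → ¬Disjoint (B t) (B u))
    {i j : ι} (hi : ∀ a, Disjoint (B a) (B i₂) → ¬Disjoint (B i) (B a))
    (hj : ∀ a, Disjoint (B a) (B i₂) → ¬Disjoint (B j) (B a)) : ¬Disjoint (B i) (B j) := by
  by_cases hj₂ : Disjoint (B j) (B i₂)
  · exact hi j hj₂
  by_cases hi₂ : Disjoint (B i) (B i₂)
  · exact fun h => hj i hi₂ h.symm
  exact hC i j (fun h => hi i₁ h₁₂ h.symm) (fun h => hi₂ h.symm) (fun h => hj i₁ h₁₂ h.symm)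
    (fun h => hj₂ h.symm)

theorem pierceable_two_of_pairwise_transversals [Fintype ι] (hB : ∀ i, IsBoxIn d (B i))
    (h5 : ∀ S : Finset ι, S.card ≤ 5 → PierceableOn B S 2) {i₁ i₂ : ι}
    (h₁₂ : Disjoint (B i₁) (B i₂))
    (hC : ∀ t u, ¬Disjoint (B i₁) (B t) → ¬Disjoint (B i₂) (B t) → ¬Disjoint (B i₁) (B u) →
      ¬Disjoint (B i₂) (B u) → ¬Disjoint (B t) (B u)) :
    Pierceable B 2 := by
  refine pierceable_two_of_forall_or hB
    (fun i => ∀ a, Disjoint (B a) (B i₂) → ¬Disjoint (B i) (B a))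
    (fun i => ∀ b, Disjoint (B b) (B i₁) → ¬Disjoint (B i) (B b))
    (fun _ hi _ hj => not_disjoint_of_forall_not_disjoint h₁₂ hC hi hj)
    (fun _ hi _ hj => not_disjoint_of_forall_not_disjoint h₁₂.symm
      (fun t u h₂t h₁t h₂u h₁u => hC t u h₁t h₂t h₁u h₂u) hi hj) fun i => ?_
  by_contra! h
  obtain ⟨⟨a, ha₂, hia⟩, b, hb₁, hib⟩ := h
  exact false_of_disjoint_cycle h5 hia ha₂ h₁₂.symm hb₁.symm hib.symm

theorem disjoint_and_disjoint_of_notMem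
    (h5 : ∀ S : Finset ι, S.card ≤ 5 → PierceableOn B S 2) {i₁ i₂ t u v : ι}
    (h₁₂ : Disjoint (B i₁) (B i₂)) (htu : Disjoint (B t) (B u)) {x y : Fin d → ℝ}
    (hx : ¬Disjoint (B v) (B i₁) → ¬Disjoint (B v) (B t) → x ∈ B v)
    (hy : ¬Disjoint (B v) (B i₂) → ¬Disjoint (B v) (B u) → y ∈ B v) (hvx : x ∉ B v)
    (hvy : y ∉ B v) :
    (Disjoint (B v) (B i₁) ∧ Disjoint (B v) (B u)) ∨
      (Disjoint (B v) (B t) ∧ Disjoint (B v) (B i₂)) := by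
  have := not_disjoint_or_not_disjoint h5 h₁₂ v
  have := not_disjoint_or_not_disjoint h5 htu v
  tauto

theorem pierceable_two_of_corners (h5 : ∀ S : Finset ι, S.card ≤ 5 → PierceableOn B S 2)
    {i₁ i₂ t u : ι} (h₁₂ : Disjoint (B i₁) (B i₂)) (htu : Disjoint (B t) (B u))
    {x₁ y₁ x₂ y₂ : Fin d → ℝ}
    (hx₁ : ∀ v, ¬Disjoint (B v) (B i₁) → ¬Disjoint (B v) (B t) → x₁ ∈ B v)
    (hy₁ : ∀ v, ¬Disjoint (B v) (B i₂) → ¬Disjoint (B v) (B t) → y₁ ∈ B v)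
    (hx₂ : ∀ v, ¬Disjoint (B v) (B i₁) → ¬Disjoint (B v) (B u) → x₂ ∈ B v)
    (hy₂ : ∀ v, ¬Disjoint (B v) (B i₂) → ¬Disjoint (B v) (B u) → y₂ ∈ B v) :
    Pierceable B 2 := by
  by_contra hnp
  obtain ⟨v, hvx₁, hvy₂⟩ : ∃ v, x₁ ∉ B v ∧ y₂ ∉ B v := by
    by_contra! h
    exact hnp (pierceable_two_of_forall_mem_or fun v => or_iff_not_imp_left.2 (h v))
  obtain ⟨w, hwx₂, hwy₁⟩ : ∃ w, x₂ ∉ B w ∧ y₁ ∉ B w := by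
    by_contra! h
    exact hnp (pierceable_two_of_forall_mem_or fun w => or_iff_not_imp_left.2 (h w))
  rcases disjoint_and_disjoint_of_notMem h5 h₁₂ htu (hx₁ v) (hy₂ v) hvx₁ hvy₂
    with ⟨hv₁, hvu⟩ | ⟨hvt, hv₂⟩ <;>
  rcases disjoint_and_disjoint_of_notMem h5 h₁₂ htu.symm (hx₂ w) (hy₁ w) hwx₂ hwy₁
    with ⟨hw₁, hwt⟩ | ⟨hwu, hw₂⟩
  · exact false_of_disjoint_cycle h5 hvu htu.symm hwt.symm hw₁ hv₁.symm
  · exact false_of_disjoint_cycle h5 hv₁ h₁₂ hw₂.symm hwu hvu.symm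
  · exact false_of_disjoint_cycle h5 hv₂ h₁₂.symm hw₁.symm hwt hvt.symm
  · exact false_of_disjoint_cycle h5 hvt htu hwu.symm hw₂ hv₂.symm

theorem pierceable_two_of_disjoint_transversals (hB : ∀ i, IsSegmentIn d (B i))
    (h5 : ∀ S : Finset ι, S.card ≤ 5 → PierceableOn B S 2) {i₁ i₂ t u : ι}
    (h₁₂ : Disjoint (B i₁) (B i₂)) (htu : Disjoint (B t) (B u)) (h₁t : ¬Disjoint (B i₁) (B t))
    (h₂t : ¬Disjoint (B i₂) (B t)) (h₁u : ¬Disjoint (B i₁) (B u)) (h₂u : ¬Disjoint (B i₂) (B u)) :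
    Pierceable B 2 := by
  obtain ⟨x₁, hx₁⟩ := not_disjoint_iff_nonempty_inter.1 h₁t
  obtain ⟨y₁, hy₁⟩ := not_disjoint_iff_nonempty_inter.1 h₂t
  obtain ⟨x₂, hx₂⟩ := not_disjoint_iff_nonempty_inter.1 h₁u
  obtain ⟨y₂, hy₂⟩ := not_disjoint_iff_nonempty_inter.1 h₂u
  exact pierceable_two_of_corners h5 h₁₂ htu
    (fun v => (hB i₁).corner_mem (hB i₂) (hB t) (hB u) h₁₂ htu hx₁ hy₁ hx₂ hy₂ (hB v))
    (fun v => (hB i₂).corner_mem (hB i₁) (hB t) (hB u) h₁₂.symm htu hy₁ hx₁ hy₂ hx₂ (hB v))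
    (fun v => (hB i₁).corner_mem (hB i₂) (hB u) (hB t) h₁₂ htu.symm hx₂ hy₂ hx₁ hy₁ (hB v))
    (fun v => (hB i₂).corner_mem (hB i₁) (hB u) (hB t) h₁₂.symm htu.symm hy₂ hx₂ hy₁ hx₁ (hB v))

end Piercing

theorem helly_two_piercing_segments_general {ι : Type*} [Fintype ι] (d : ℕ)
    (B : ι → Set (Fin d → ℝ)) (hB : ∀ i, IsSegmentIn d (B i)) :
    Pierceable B 2 ↔ ∀ S : Finset ι, S.card ≤ 5 → PierceableOn B S 2 := by
  refine ⟨fun h S _ => h.pierceableOn S, fun h5 => ?_⟩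
  have hbox i := (hB i).isBoxIn
  by_cases hpair : ∀ i j, ¬Disjoint (B i) (B j)
  · exact pierceable_two_of_forall_or hbox (fun _ => True) (fun _ => True)
      (fun i _ j _ => hpair i j) (fun i _ j _ => hpair i j) fun _ => Or.inl trivial
  push Not at hpair
  obtain ⟨i₁, i₂, h₁₂⟩ := hpair
  by_cases hC : ∃ t u, ¬Disjoint (B i₁) (B t) ∧ ¬Disjoint (B i₂) (B t) ∧
      ¬Disjoint (B i₁) (B u) ∧ ¬Disjoint (B i₂) (B u) ∧ Disjoint (B t) (B u)
  · obtain ⟨t, u, h₁t, h₂t, h₁u, h₂u, htu⟩ := hC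
    exact pierceable_two_of_disjoint_transversals hB h5 h₁₂ htu h₁t h₂t h₁u h₂u
  · push Not at hC
    exact pierceable_two_of_pairwise_transversals hbox h5 h₁₂ hC

/-- a finite family of axis-parallel segments in `ℝ^d` (`d ≥ 1`) is
2-pierceable iff every subfamily of cardinality 5 is 2-pierceable (`h(d,1,2) = 5`). -/
theorem helly_two_piercing_segments {ι : Type*} [Fintype ι] (d : ℕ) (hd : 1 ≤ d)
    (B : ι → Set (Fin d → ℝ)) (hB : ∀ i, IsSegmentIn d (B i)) :
    Pierceable B 2 ↔ ∀ S : Finset ι, S.card ≤ 5 → PierceableOn B S 2 :=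
  helly_two_piercing_segments_general d B hB
end
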